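/- Ladder lemma: Let 𝒜 be an abelian category and k ≥ 1. Suppose given objects Z, X₀, …, X_k, Y₀, …, Y_k of 𝒜 and morphisms f : Z → X₀, q_i : X_i → Y_i for 0 ≤ i ≤ k, p_i : X_{i−1} → X_i and r_i : Y_{i−1} → Y_i for 1 ≤ i ≤ k, such that (i) the sequence 0 → Z →f X₀ →q₀ Y₀ → 0 is exact, and (ii) for each 1 ≤ i ≤ k, q_i ∘ p_i = r_i ∘ q_{i−1} and the sequence 0 → X_{i−1} → X_i ⊕ Y_{i−1} → Y_i → 0 is exact, where the first map has components (p_i, q_{i−1}) and the second map has components (q_i, −r_i). Then Z is isomorphic to the kernel of the top rung q_k : X_k → Y_k. -/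

import Mathlib

/-!
Exactness of `0 → Xᵢ → Xᵢ₊₁ ⊞ Yᵢ → Yᵢ₊₁` says precisely that the rung square with sides
`pᵢ, qᵢ, qᵢ₊₁, rᵢ` is a pullback, and in a pullback square the two parallel sides have
isomorphic kernels. So `ker q₀ ≅ ker q₁ ≅ ⋯ ≅ ker qₖ`, and `Z ≅ ker q₀` by exactness of the
bottom row.
-/

open CategoryTheory CategoryTheory.Limits

namespace TS

section

variable {𝒜 : Type*} [Category 𝒜] [Abelian 𝒜] {X₁ X₂ X₃ X₄ : 𝒜}
  {fst : X₁ ⟶ X₂} {snd : X₁ ⟶ X₃} {f : X₂ ⟶ X₄} {g : X₃ ⟶ X₄}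

lemma comm_of_biprod_lift_comp_desc_neg_eq_zero
    (w : biprod.lift fst snd ≫ biprod.desc f (-g) = 0) : fst ≫ f = snd ≫ g :=
  add_neg_eq_zero.mp (by simpa using w)

lemma isPullback_of_exact_biprod (w : biprod.lift fst snd ≫ biprod.desc f (-g) = 0)
    (hS : (ShortComplex.mk _ _ w).Exact) [Mono (biprod.lift fst snd)] :
    IsPullback fst snd f g :=
  let sq : CommSq fst snd f g := ⟨comm_of_biprod_lift_comp_desc_neg_eq_zero w⟩
  ⟨sq, ⟨sq.isLimitEquivIsLimitKernelFork.symm hS.fIsKernel⟩⟩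

end

theorem ladder_kernel_general {𝒜 : Type*} [Category 𝒜] [Abelian 𝒜] (k : ℕ)
    (Z : 𝒜) (X Y : ℕ → 𝒜) (q : ∀ i, X i ⟶ Y i)
    (p : ∀ i, X i ⟶ X (i + 1)) (r : ∀ i, Y i ⟶ Y (i + 1))
    (f : Z ⟶ X 0) (hw₀ : f ≫ q 0 = 0)
    (hse₀ : (ShortComplex.mk f (q 0) hw₀).ShortExact)
    (hw : ∀ i, i < k → biprod.lift (p i) (q i) ≫ biprod.desc (q (i + 1)) (-(r i)) = 0)
    (hse : ∀ i, ∀ hi : i < k,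
      (ShortComplex.mk (biprod.lift (p i) (q i)) (biprod.desc (q (i + 1)) (-(r i)))
        (hw i hi)).ShortExact) :
    Nonempty (Z ≅ kernel (q k)) := by
  have rung : ∀ i, i < k → Nonempty (kernel (q i) ≅ kernel (q (i + 1))) := fun i hi => by
    have := (hse i hi).mono_f
    have sq := (isPullback_of_exact_biprod (hw i hi) (hse i hi).exact).flip
    have := isIso_kernel_map_of_isPullback sq
    exact ⟨asIso (kernel.map _ _ _ _ sq.w)⟩
  have climb : ∀ i, i ≤ k → Nonempty (Z ≅ kernel (q i)) := by
    intro i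
    induction i with
    | zero => exact fun _ => ⟨hse₀.fIsKernel.conePointUniqueUpToIso (limit.isLimit _)⟩
    | succ i ih =>
      intro hi
      obtain ⟨e⟩ := ih (by omega)
      obtain ⟨e'⟩ := rung i hi
      exact ⟨e ≪≫ e'⟩
  exact climb k le_rfl

/-- Ladder lemma: given a ladder of height `k ≥ 1` built from the exact sequence
`0 → Z → X₀ → Y₀ → 0` and, for each `0 ≤ i < k`, commuting squares
`q (i+1) ∘ p i = r i ∘ q i` with exact sequences
`0 → Xᵢ → X_{i+1} ⊞ Yᵢ → Y_{i+1} → 0` (first map with components `(p i, q i)`,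
second map with components `(q (i+1), -(r i))`), the object `Z` is isomorphic to
the kernel of the top rung `q k : X k ⟶ Y k`. -/
theorem ladder_kernel {𝒜 : Type*} [Category 𝒜] [Abelian 𝒜] (k : ℕ) (hk : 1 ≤ k)
    (Z : 𝒜) (X Y : ℕ → 𝒜) (q : ∀ i, X i ⟶ Y i)
    (p : ∀ i, X i ⟶ X (i + 1)) (r : ∀ i, Y i ⟶ Y (i + 1))
    (f : Z ⟶ X 0) (hw₀ : f ≫ q 0 = 0)
    (hse₀ : (ShortComplex.mk f (q 0) hw₀).ShortExact)
    (hw : ∀ i, i < k → biprod.lift (p i) (q i) ≫ biprod.desc (q (i + 1)) (-(r i)) = 0)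
    (hse : ∀ i, ∀ hi : i < k,
      (ShortComplex.mk (biprod.lift (p i) (q i)) (biprod.desc (q (i + 1)) (-(r i)))
        (hw i hi)).ShortExact) :
    Nonempty (Z ≅ kernel (q k)) :=
  ladder_kernel_general k Z X Y q p r f hw₀ hse₀ hw hse

end TS
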